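/- For the anticommutative algebra 𝒜₂ on ℂ³ with nonzero products e₁e₂ = e₁, e₂e₃ = e₂ (extended by anticommutativity), the space of derivations has dimension 2. -/
import Mathlib


/-- Anticommutative multiplication of `𝒜₂` on ℂ³ (basis `e₁,e₂,e₃` = indices
`0,1,2`): `e₁e₂ = e₁`, `e₂e₁ = -e₁`, `e₂e₃ = e₂`, `e₃e₂ = -e₂`, all other basis
products zero. -/
def mulA2 (x y : Fin 3 → ℂ) : Fin 3 → ℂ :=
  ![x 0 * y 1 - x 1 * y 0, x 1 * y 2 - x 2 * y 1, 0]

noncomputable def DerA2 : Submodule ℂ ((Fin 3 → ℂ) →ₗ[ℂ] (Fin 3 → ℂ)) where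
  carrier := {D | ∀ x y, D (mulA2 x y) = mulA2 (D x) y + mulA2 x (D y)}
  add_mem' := by
    intro D E hD hE x y
    have h1 : mulA2 (D x + E x) y = mulA2 (D x) y + mulA2 (E x) y := by
      funext i; fin_cases i <;> (simp [mulA2]; try ring)
    have h2 : mulA2 x (D y + E y) = mulA2 x (D y) + mulA2 x (E y) := by
      funext i; fin_cases i <;> (simp [mulA2]; try ring)
    simp only [LinearMap.add_apply, hD x y, hE x y, h1, h2]
    abel
  zero_mem' := by
    intro x y
    funext i; fin_cases i <;> simp [mulA2]
  smul_mem' := by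
    intro c D hD x y
    have h1 : mulA2 (c • D x) y = c • mulA2 (D x) y := by
      funext i; fin_cases i <;> (simp [mulA2]; try ring)
    have h2 : mulA2 x (c • D y) = c • mulA2 x (D y) := by
      funext i; fin_cases i <;> (simp [mulA2]; try ring)
    simp only [LinearMap.smul_apply, hD x y, h1, h2, smul_add]
/-- The general derivation with parameters `a, d`. -/
def DgenA2 (a d : ℂ) : (Fin 3 → ℂ) →ₗ[ℂ] (Fin 3 → ℂ) where
  toFun x := ![a * x 0 + d * x 1 - d * x 2, 0, 0]
  map_add' u v := by funext i; fin_cases i <;> (simp; try ring)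
  map_smul' c u := by funext i; fin_cases i <;> (simp; try ring)

/-- Projection of a derivation to its two free parameters. -/
noncomputable def phiA2 : DerA2 →ₗ[ℂ] ℂ × ℂ where
  toFun D := (D.1 ![1,0,0] 0, D.1 ![0,1,0] 0)
  map_add' D E := by simp
  map_smul' c D := by simp

lemma phiA2_bij : Function.Bijective phiA2 := by
  constructor
  · -- injective
    rw [injective_iff_map_eq_zero]
    intro ⟨D, hD⟩ h
    have h1 : D ![1,0,0] 0 = 0 := by
      have := congrArg Prod.fst h; simpa [phiA2] using this
    have h2 : D ![0,1,0] 0 = 0 := by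
      have := congrArg Prod.snd h; simpa [phiA2] using this
    have e12 := hD ![1,0,0] ![0,1,0]
    have e23 := hD ![0,1,0] ![0,0,1]
    have e13 := hD ![1,0,0] ![0,0,1]
    have m12 : mulA2 ![1,0,0] ![0,1,0] = ![1,0,0] := by
      funext i; fin_cases i <;> simp [mulA2]
    have m23 : mulA2 ![0,1,0] ![0,0,1] = ![0,1,0] := by
      funext i; fin_cases i <;> simp [mulA2]
    have m13 : mulA2 ![1,0,0] ![0,0,1] = 0 := by
      funext i; fin_cases i <;> simp [mulA2]
    rw [m12] at e12; rw [m23] at e23; rw [m13, map_zero] at e13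
    have a2 : D ![1,0,0] 2 = 0 := by
      have := congrFun e12 2; simpa [mulA2] using this
    have a1 : D ![1,0,0] 1 = 0 := by
      have := congrFun e12 1; simpa [mulA2, a2] using this
    have b1 : D ![0,1,0] 1 = 0 := by
      have h0 := congrFun e12 0; simp [mulA2] at h0
      linear_combination h0
    have b2 : D ![0,1,0] 2 = 0 := by
      have := congrFun e23 2; simpa [mulA2] using this
    have c2 : D ![0,0,1] 2 = 0 := by
      have h0 := congrFun e23 1; simp [mulA2, b1] at h0
      exact h0.symm
    have c0 : D ![0,0,1] 0 = 0 := by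
      have h0 := congrFun e23 0; simp [mulA2, h2, b1] at h0
      linear_combination h0
    have c1 : D ![0,0,1] 1 = 0 := by
      have h0 := congrFun e13 0; simp [mulA2, a1, a2] at h0
      exact h0.symm
    refine Subtype.ext (LinearMap.ext fun x => ?_)
    have hx : x = x 0 • ![(1:ℂ),0,0] + x 1 • ![0,1,0] + x 2 • ![0,0,1] := by
      funext j; fin_cases j <;> simp
    rw [hx]
    simp only [map_add, map_smul, LinearMap.zero_apply]
    funext i
    fin_cases i <;>
      simp [h1, h2, a1, a2, b1, b2, c0, c1, c2]
  · -- surjective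
    rintro ⟨a, d⟩
    refine ⟨⟨DgenA2 a d, ?_⟩, ?_⟩
    · intro x y
      funext i
      fin_cases i <;> (simp [mulA2, DgenA2]; try ring)
    · simp [phiA2, DgenA2]

/-- The space of derivations of `𝒜₂` has dimension 2. -/
theorem stmt_6 : Module.finrank ℂ DerA2 = 2 := by
  rw [LinearEquiv.finrank_eq (LinearEquiv.ofBijective phiA2 phiA2_bij)]
  simp [Module.finrank_prod]
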